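/- arXiv:2402.08913 — 2 statements merged into one kernel-verified Lean document; each statement's English description precedes it below -/
import Mathlib

section
/- Let $\tilde b \in \mathbb{R}^n$ satisfy the Diophantine condition with constant $c$ and exponent $r$, and suppose $(U_0, B_0) \in H^s(\mathbb{T}^n)$, $s \ge 0$, with $\int U_0 = \int B_0 = 0$. Let $(U,B)$ solve the linearized system $\partial_t U = \tilde b \cdot \nabla B$, $\partial_t B - \Delta B = \tilde b \cdot \nabla U$ on $\mathbb{T}^n$ with divergence-free initial data. Then for all $t \ge 0$, $\|U(t)\|_{L^2} + \|B(t)\|_{L^2} \le C(1+t)^{-\frac{s}{2(1+r)}}(\|U_0\|_{H^s} + \|B_0\|_{H^s})$. -/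
/-!
Fourier mode `k` solves `u' = i a b`, `b' = i a u - m b` with `a = b̃ · k` and `m = |k|²`.
Only `b` is damped, but with `T = 1 + |b̃|²` the functional
`L = |u|² + |b|² - (a / (T m)) Im ⟪u, b⟫` is comparable to `|u|² + |b|²` and satisfies
`L' ≤ -(a² / (3 m T)) L`, so every mode decays like `exp (-(a² / (3 m T)) t)`. The Diophantine
condition bounds this rate below by `κ / m^(1+r)`, and
`exp (-κ t / m^(1+r)) ≤ C m^s (1+t)^(-s/(1+r))` trades the `H^s` weight for decay in time.
The zero mode is constant, hence zero. Summing over the modes and taking square roots gives the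
estimate.
-/

open Real
open scoped InnerProductSpace

section InnerProduct
open Complex
variable {E : Type*} [NormedAddCommGroup E] [InnerProductSpace ℂ E]

theorem HasDerivAt.complex_re {f : ℝ → ℂ} {f' : ℂ} {t : ℝ} (h : HasDerivAt f f' t) :
    HasDerivAt (fun s => (f s).re) f'.re t :=
  reCLM.hasFDerivAt.comp_hasDerivAt t h

theorem HasDerivAt.complex_im {f : ℝ → ℂ} {f' : ℂ} {t : ℝ} (h : HasDerivAt f f' t) :
    HasDerivAt (fun s => (f s).im) f'.im t :=
  imCLM.hasFDerivAt.comp_hasDerivAt t h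

theorem HasDerivAt.norm_sq_of_complex {f : ℝ → E} {f' : E} {t : ℝ} (h : HasDerivAt f f' t) :
    HasDerivAt (fun s => ‖f s‖ ^ 2) (2 * (⟪f t, f'⟫_ℂ).re) t := by
  convert (h.inner ℂ h).complex_re using 1
  · funext s; exact (inner_self_eq_norm_sq (𝕜 := ℂ) (f s)).symm
  · rw [add_re, ← inner_conj_symm f', conj_re]; ring

theorem sq_inner_im_le (x y : E) : (⟪x, y⟫_ℂ).im ^ 2 ≤ ‖x‖ ^ 2 * ‖y‖ ^ 2 := by
  rw [← mul_pow, sq_le_sq, abs_mul, abs_norm, abs_norm]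
  exact (abs_im_le_norm _).trans (norm_inner_le_norm x y)

end InnerProduct

theorem eq_of_hasDerivAt_zero {E : Type*} [NormedAddCommGroup E] [NormedSpace ℝ E] {f : ℝ → E}
    (hf : ∀ x, HasDerivAt f 0 x) (x y : ℝ) : f x = f y :=
  is_const_of_deriv_eq_zero (fun x => (hf x).differentiableAt) (fun x => (hf x).deriv) x y

theorem le_mul_exp_of_hasDerivAt_le {f f' : ℝ → ℝ} {K t : ℝ} (hf : ∀ x, HasDerivAt f (f' x) x)
    (hK : ∀ x, f' x ≤ K * f x) (ht : 0 ≤ t) : f t ≤ f 0 * exp (K * t) := by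
  have := le_gronwallBound_of_liminf_deriv_right_le (δ := f 0) (ε := 0)
    (fun x _ => (hf x).continuousAt.continuousWithinAt)
    (fun x _ r hr => (hf x).hasDerivWithinAt.liminf_right_slope_le hr) le_rfl
    (fun x _ => by simpa using hK x) t ⟨ht, le_rfl⟩
  simpa [gronwallBound_ε0] using this

section Lyapunov
variable {a m T eu eb w : ℝ}

theorem lyapunov_cross_term_le (hm : 1 ≤ m) (hT : 1 ≤ T) (ha : a ^ 2 ≤ T * m)
    (hw : w ^ 2 ≤ eu * eb) (heu : 0 ≤ eu) (heb : 0 ≤ eb) :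
    |a / (T * m) * w| ≤ (eu + eb) / 2 := by
  have hTm : 1 ≤ T * m := one_le_mul_of_one_le_of_one_le hT hm
  refine abs_le_of_sq_le_sq ?_ (by positivity)
  calc (a / (T * m) * w) ^ 2 = a ^ 2 / (T * m) ^ 2 * w ^ 2 := by ring
    _ ≤ 1 * (eu * eb) := by
      gcongr
      rw [div_le_one (by positivity)]
      nlinarith
    _ ≤ ((eu + eb) / 2) ^ 2 := by nlinarith [sq_nonneg (eu - eb)]

theorem lyapunov_dissipation (hm : 1 ≤ m) (hT : 1 ≤ T) (ha : a ^ 2 ≤ T * m)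
    (hw : w ^ 2 ≤ eu * eb) (heu : 0 ≤ eu) (heb : 0 ≤ eb) :
    -2 * m * eb - a / (T * m) * (a * eu - a * eb - m * w) ≤
      -(a ^ 2 / (3 * m * T)) * (eu + eb - a / (T * m) * w) := by
  have hm0 : 0 < m := by linarith
  have hT0 : 0 < T := by linarith
  have amgm : 2 * m * (a * w) ≤ a ^ 2 * eu + m ^ 2 * eb := by
    refine le_of_sq_le_sq ?_ (by positivity)
    nlinarith [sq_nonneg (a ^ 2 * eu - m ^ 2 * eb),
      mul_le_mul_of_nonneg_left hw (sq_nonneg (2 * m * a))]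
  have h_eu : 0 ≤ (a ^ 2 * m ^ 2 * T + a ^ 4) * eu := by positivity
  have h_eb : (8 * a ^ 2 * m ^ 2 * T - 12 * m ^ 4 * T ^ 2 + 3 * m ^ 4 * T - a ^ 2 * m ^ 2) * eb
      ≤ 0 := by
    refine mul_nonpos_of_nonpos_of_nonneg ?_ heb
    have : a ^ 2 * m ^ 2 * T ≤ m ^ 3 * T ^ 2 := by
      nlinarith [mul_le_mul_of_nonneg_left ha (by positivity : 0 ≤ m ^ 2 * T)]
    nlinarith [mul_le_mul_of_nonneg_left hm (by positivity : 0 ≤ m ^ 3 * T ^ 2),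
      mul_le_mul_of_nonneg_left hT (by positivity : 0 ≤ m ^ 4 * T), sq_nonneg (a * m)]
  -- the claim, multiplied by `3 m² T²`
  have hpoly : -2 * a ^ 2 * m * T * eu + (4 * a ^ 2 * m * T - 6 * m ^ 3 * T ^ 2) * eb
      + a * (3 * m ^ 2 * T - a ^ 2) * w ≤ 0 := by
    nlinarith [mul_le_mul_of_nonneg_left amgm (by nlinarith : 0 ≤ 3 * m ^ 2 * T - a ^ 2)]
  rw [← sub_nonpos]
  refine Eq.trans_le ?_ <|
    div_nonpos_of_nonpos_of_nonneg hpoly (by positivity : 0 ≤ 3 * m ^ 2 * T ^ 2)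
  field_simp
  ring

end Lyapunov

theorem energy_le_of_hasDerivAt {a m T t : ℝ} {eu eb w : ℝ → ℝ} (hm : 1 ≤ m) (hT : 1 ≤ T)
    (ha : a ^ 2 ≤ T * m)
    (heu : ∀ s, HasDerivAt eu (-2 * a * w s) s)
    (heb : ∀ s, HasDerivAt eb (2 * a * w s - 2 * m * eb s) s)
    (hw : ∀ s, HasDerivAt w (a * eu s - a * eb s - m * w s) s)
    (hw_sq : ∀ s, w s ^ 2 ≤ eu s * eb s) (heu_nonneg : ∀ s, 0 ≤ eu s)
    (heb_nonneg : ∀ s, 0 ≤ eb s) (ht : 0 ≤ t) :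
    eu t + eb t ≤ 3 * exp (-(a ^ 2 / (3 * m * T)) * t) * (eu 0 + eb 0) := by
  set L := fun s => eu s + eb s - a / (T * m) * w s
  have hL : ∀ s, HasDerivAt L (-2 * m * eb s - a / (T * m) * (a * eu s - a * eb s - m * w s)) s :=
    fun s => (((heu s).add (heb s)).sub ((hw s).const_mul _)).congr_deriv (by ring)
  have hdecay := le_mul_exp_of_hasDerivAt_le hL
    (fun s => lyapunov_dissipation hm hT ha (hw_sq s) (heu_nonneg s) (heb_nonneg s)) ht
  have hcross := fun s => abs_le.1 <|
    lyapunov_cross_term_le hm hT ha (hw_sq s) (heu_nonneg s) (heb_nonneg s)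
  simp only [L] at hdecay
  have hexp := exp_pos (-(a ^ 2 / (3 * m * T)) * t)
  nlinarith [hcross t, hcross 0]

theorem exists_rpow_mul_exp_neg_mul_le {p b : ℝ} (hp : 0 ≤ p) (hb : 0 < b) :
    ∃ C, ∀ x, 0 ≤ x → x ^ p * exp (-b * x) ≤ C := by
  obtain ⟨X, hX⟩ := Filter.eventually_atTop.1 <|
    (tendsto_rpow_mul_exp_neg_mul_atTop_nhds_zero p b hb).eventually (ge_mem_nhds zero_lt_one)
  obtain ⟨C, hC⟩ := (isCompact_Icc (a := 0) (b := X)).bddAbove_image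
    ((continuous_rpow_const hp).mul
      (show Continuous fun x : ℝ => exp (-b * x) by fun_prop)).continuousOn
  refine ⟨max C 1, fun x hx => ?_⟩
  rcases le_total x X with hxX | hXx
  · exact le_max_of_le_left (hC ⟨x, ⟨hx, hxX⟩, rfl⟩)
  · exact le_max_of_le_right (hX x hXx)

theorem exists_exp_neg_le_rpow_mul_rpow {κ q s : ℝ} (hκ : 0 < κ) (hq : 0 < q) (hs : 0 ≤ s) :
    ∃ C > 0, ∀ m t : ℝ, 1 ≤ m → 0 ≤ t →
      exp (-(κ / m ^ q) * t) ≤ C * m ^ s * (1 + t) ^ (-(s / q)) := by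
  obtain ⟨C, hC⟩ := exists_rpow_mul_exp_neg_mul_le (div_nonneg hs hq.le) hκ
  refine ⟨exp κ * max C 1, by positivity, fun m t hm ht => ?_⟩
  have hm0 : 0 < m := by linarith
  have hmq : 1 ≤ m ^ q := one_le_rpow hm hq.le
  have ht1 : 0 < 1 + t := by linarith
  -- with `x = (1+t) / m^q`, the bound reduces to one on `x^(s/q) exp (-κ x)`
  set x := (1 + t) / m ^ q
  have hexp : exp (-(κ / m ^ q) * t) = exp (κ / m ^ q) * exp (-κ * x) := by
    rw [← exp_add]; congr 1; simp only [x]; field_simp; ring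
  have hpow : (1 + t) ^ (s / q) = x ^ (s / q) * m ^ s := by
    rw [div_rpow ht1.le (by positivity), ← rpow_mul hm0.le, mul_div_cancel₀ s hq.ne',
      div_mul_cancel₀ _ (by positivity)]
  rw [rpow_neg ht1.le, ← div_eq_mul_inv, le_div_iff₀ (by positivity), hexp, hpow]
  calc exp (κ / m ^ q) * exp (-κ * x) * (x ^ (s / q) * m ^ s)
      = exp (κ / m ^ q) * (x ^ (s / q) * exp (-κ * x)) * m ^ s := by ring
    _ ≤ exp κ * max C 1 * m ^ s := by
      gcongr
      · exact div_le_self hκ.le hmq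
      · exact (hC x (by positivity)).trans (le_max_left _ _)

theorem decay_rate_le_of_diophantine {a c m r T : ℝ} (hc : 0 ≤ c) (hm : 0 < m) (hT : 0 < T)
    (h : c / √m ^ r ≤ |a|) : c ^ 2 / (3 * T) / m ^ (1 + r) ≤ a ^ 2 / (3 * m * T) := by
  have hsq : c ^ 2 / m ^ r ≤ a ^ 2 := by
    have := pow_le_pow_left₀ (by positivity) h 2
    rwa [div_pow, sq_abs, ← rpow_div_two_eq_sqrt r hm.le, ← rpow_mul_natCast hm.le,
      Nat.cast_ofNat, div_mul_cancel₀ r two_ne_zero] at this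
  rw [rpow_add hm, rpow_one]
  calc c ^ 2 / (3 * T) / (m * m ^ r) = c ^ 2 / m ^ r / (3 * m * T) := by ring
    _ ≤ a ^ 2 / (3 * m * T) := by gcongr

section Mode
variable {E : Type*} [NormedAddCommGroup E] [InnerProductSpace ℂ E] {a m T : ℝ} {u b : ℝ → E}

theorem hasDerivAt_norm_sq_fst {t : ℝ} (hu : HasDerivAt u ((Complex.I * a) • b t) t) :
    HasDerivAt (fun s => ‖u s‖ ^ 2) (-2 * a * (⟪u t, b t⟫_ℂ).im) t := by
  convert hu.norm_sq_of_complex using 1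
  simp; ring

theorem hasDerivAt_norm_sq_snd {t : ℝ}
    (hb : HasDerivAt b ((Complex.I * a) • u t - (m : ℂ) • b t) t) :
    HasDerivAt (fun s => ‖b s‖ ^ 2) (2 * a * (⟪u t, b t⟫_ℂ).im - 2 * m * ‖b t‖ ^ 2) t := by
  convert hb.norm_sq_of_complex using 1
  rw [inner_sub_right, inner_smul_right, inner_smul_right, inner_self_eq_norm_sq_to_K,
    ← inner_conj_symm (b t) (u t)]
  simp [-inner_conj_symm, ← Complex.ofReal_pow]
  ring

theorem hasDerivAt_inner_im {t : ℝ} (hu : HasDerivAt u ((Complex.I * a) • b t) t)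
    (hb : HasDerivAt b ((Complex.I * a) • u t - (m : ℂ) • b t) t) :
    HasDerivAt (fun s => (⟪u s, b s⟫_ℂ).im)
      (a * ‖u t‖ ^ 2 - a * ‖b t‖ ^ 2 - m * (⟪u t, b t⟫_ℂ).im) t := by
  convert (hu.inner ℂ hb).complex_im using 1
  rw [inner_sub_right, inner_smul_right, inner_smul_right, inner_smul_left,
    inner_self_eq_norm_sq_to_K, inner_self_eq_norm_sq_to_K]
  simp [← Complex.ofReal_pow]; ring

theorem mode_energy_le {t : ℝ} (hm : 1 ≤ m) (hT : 1 ≤ T) (ha : a ^ 2 ≤ T * m)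
    (hu : ∀ s, HasDerivAt u ((Complex.I * a) • b s) s)
    (hb : ∀ s, HasDerivAt b ((Complex.I * a) • u s - (m : ℂ) • b s) s) (ht : 0 ≤ t) :
    ‖u t‖ ^ 2 + ‖b t‖ ^ 2 ≤ 3 * exp (-(a ^ 2 / (3 * m * T)) * t) * (‖u 0‖ ^ 2 + ‖b 0‖ ^ 2) :=
  energy_le_of_hasDerivAt hm hT ha (fun s => hasDerivAt_norm_sq_fst (hu s))
    (fun s => hasDerivAt_norm_sq_snd (hb s)) (fun s => hasDerivAt_inner_im (hu s) (hb s))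
    (fun s => sq_inner_im_le _ _) (fun _ => by positivity) (fun _ => by positivity) ht

theorem mode_energy_le_of_diophantine {c r s C t : ℝ} (hm : 1 ≤ m) (hT : 1 ≤ T)
    (ha : a ^ 2 ≤ T * m) (hc : 0 ≤ c) (hD : c / √m ^ r ≤ |a|) (hs : 0 ≤ s) (hC : 0 ≤ C)
    (hdecay : exp (-(c ^ 2 / (3 * T) / m ^ (1 + r)) * t) ≤ C * m ^ s * (1 + t) ^ (-(s / (1 + r))))
    (hu : ∀ s, HasDerivAt u ((Complex.I * a) • b s) s)
    (hb : ∀ s, HasDerivAt b ((Complex.I * a) • u s - (m : ℂ) • b s) s) (ht : 0 ≤ t) :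
    ‖u t‖ ^ 2 + ‖b t‖ ^ 2 ≤ 3 * C * (1 + t) ^ (-(s / (1 + r))) *
      ((1 + m) ^ s * ‖u 0‖ ^ 2 + (1 + m) ^ s * ‖b 0‖ ^ 2) := by
  have hm0 : 0 < m := by linarith
  have hrate := decay_rate_le_of_diophantine (T := T) hc hm0 (by linarith) hD
  calc ‖u t‖ ^ 2 + ‖b t‖ ^ 2
      ≤ 3 * exp (-(a ^ 2 / (3 * m * T)) * t) * (‖u 0‖ ^ 2 + ‖b 0‖ ^ 2) :=
        mode_energy_le hm hT ha hu hb ht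
    _ ≤ 3 * (C * m ^ s * (1 + t) ^ (-(s / (1 + r)))) * (‖u 0‖ ^ 2 + ‖b 0‖ ^ 2) := by
        gcongr
        exact (Real.exp_le_exp.2 (by nlinarith)).trans hdecay
    _ ≤ 3 * (C * (1 + m) ^ s * (1 + t) ^ (-(s / (1 + r)))) * (‖u 0‖ ^ 2 + ‖b 0‖ ^ 2) := by
        gcongr; linarith
    _ = _ := by ring

end Mode

theorem one_le_sum_sq_of_ne_zero {ι : Type*} [Fintype ι] {k : ι → ℤ} (hk : k ≠ 0) :
    1 ≤ ∑ i, (k i : ℝ) ^ 2 := by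
  obtain ⟨i, hi⟩ := Function.ne_iff.1 hk
  calc (1 : ℝ) ≤ (k i : ℝ) ^ 2 := by
        exact_mod_cast (one_le_sq_iff_one_le_abs _).2 (Int.one_le_abs hi)
    _ ≤ ∑ j, (k j : ℝ) ^ 2 :=
        Finset.single_le_sum (f := fun j => (k j : ℝ) ^ 2) (fun j _ => sq_nonneg _)
          (Finset.mem_univ i)

theorem sqrt_add_le_sqrt_add_sqrt {x y : ℝ} (hx : 0 ≤ x) (hy : 0 ≤ y) : √(x + y) ≤ √x + √y := by
  rw [sqrt_le_left (by positivity)]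
  nlinarith [sq_sqrt hx, sq_sqrt hy, mul_nonneg (sqrt_nonneg x) (sqrt_nonneg y)]

theorem sqrt_tsum_add_sqrt_tsum_le {ι : Type*} {x y f g : ι → ℝ} {K : ℝ} (hK : 0 ≤ K)
    (hx : ∀ i, 0 ≤ x i) (hy : ∀ i, 0 ≤ y i) (hf : Summable f) (hg : Summable g)
    (hf0 : ∀ i, 0 ≤ f i) (hg0 : ∀ i, 0 ≤ g i) (h : ∀ i, x i + y i ≤ K * (f i + g i)) :
    √(∑' i, x i) + √(∑' i, y i) ≤ 2 * √K * (√(∑' i, f i) + √(∑' i, g i)) := by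
  have hfg : Summable fun i => K * (f i + g i) := (hf.add hg).mul_left K
  have hbound : ∀ z : ι → ℝ, (∀ i, 0 ≤ z i) → (∀ i, z i ≤ K * (f i + g i)) →
      √(∑' i, z i) ≤ √K * (√(∑' i, f i) + √(∑' i, g i)) := fun z hz hzK => by
    calc √(∑' i, z i) ≤ √(K * (∑' i, f i + ∑' i, g i)) := by
          gcongr
          rw [← hf.tsum_add hg, ← tsum_mul_left]
          exact (hfg.of_nonneg_of_le hz hzK).tsum_le_tsum hzK hfg
      _ ≤ √K * (√(∑' i, f i) + √(∑' i, g i)) := by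
          rw [sqrt_mul hK]
          gcongr
          exact sqrt_add_le_sqrt_add_sqrt (tsum_nonneg hf0) (tsum_nonneg hg0)
  have hx' := hbound x hx fun i => by linarith [h i, hy i]
  have hy' := hbound y hy fun i => by linarith [h i, hx i]
  linarith

theorem linear_stability_decay (n : ℕ) (bt : Fin n → ℝ) (c r s : ℝ)
    (hc : 0 < c) (hr : 0 < r) (hs : 0 ≤ s)
    (hD : ∀ (k : Fin n → ℤ), k ≠ 0 →
      c / (Real.sqrt (∑ i, ((k i : ℝ)) ^ 2)) ^ r ≤ |∑ i, bt i * (k i : ℝ)|) :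
    ∃ C > 0, ∀ (U B : (Fin n → ℤ) → ℝ → EuclideanSpace ℂ (Fin n)),
      (∀ (k : Fin n → ℤ) (t : ℝ), HasDerivAt (U k)
        ((Complex.I * ((∑ i, bt i * (k i : ℝ) : ℝ) : ℂ)) • B k t) t) →
      (∀ (k : Fin n → ℤ) (t : ℝ), HasDerivAt (B k)
        ((Complex.I * ((∑ i, bt i * (k i : ℝ) : ℝ) : ℂ)) • U k t
          - (((∑ i, ((k i : ℝ)) ^ 2 : ℝ)) : ℂ) • B k t) t) →
      (∀ k : Fin n → ℤ, ∑ i, (k i : ℂ) * U k 0 i = 0) →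
      (∀ k : Fin n → ℤ, ∑ i, (k i : ℂ) * B k 0 i = 0) →
      U (0 : Fin n → ℤ) 0 = 0 → B (0 : Fin n → ℤ) 0 = 0 →
      Summable (fun k : Fin n → ℤ =>
        (1 + ∑ i, ((k i : ℝ)) ^ 2) ^ s * ‖U k 0‖ ^ 2) →
      Summable (fun k : Fin n → ℤ =>
        (1 + ∑ i, ((k i : ℝ)) ^ 2) ^ s * ‖B k 0‖ ^ 2) →
      ∀ t : ℝ, 0 ≤ t →
        Real.sqrt (∑' k : Fin n → ℤ, ‖U k t‖ ^ 2)
          + Real.sqrt (∑' k : Fin n → ℤ, ‖B k t‖ ^ 2) ≤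
        C * (1 + t) ^ (-(s / (2 * (1 + r)))) *
          (Real.sqrt (∑' k : Fin n → ℤ, (1 + ∑ i, ((k i : ℝ)) ^ 2) ^ s * ‖U k 0‖ ^ 2)
            + Real.sqrt (∑' k : Fin n → ℤ, (1 + ∑ i, ((k i : ℝ)) ^ 2) ^ s * ‖B k 0‖ ^ 2)) := by
  set T := 1 + ∑ i, bt i ^ 2
  have hT : 1 ≤ T := le_add_of_nonneg_right (Finset.sum_nonneg fun i _ => sq_nonneg _)
  obtain ⟨C, hC0, hC⟩ := exists_exp_neg_le_rpow_mul_rpow (κ := c ^ 2 / (3 * T)) (by positivity)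
    (by linarith : 0 < 1 + r) hs
  refine ⟨2 * √(3 * C), by positivity, fun U B hU hB _ _ hU0 hB0 hSU hSB t ht => ?_⟩
  have hmode : ∀ k : Fin n → ℤ, ‖U k t‖ ^ 2 + ‖B k t‖ ^ 2 ≤
      3 * C * (1 + t) ^ (-(s / (1 + r))) * ((1 + ∑ i, (k i : ℝ) ^ 2) ^ s * ‖U k 0‖ ^ 2
        + (1 + ∑ i, (k i : ℝ) ^ 2) ^ s * ‖B k 0‖ ^ 2) := by
    intro k
    rcases eq_or_ne k 0 with rfl | hk
    · rw [eq_of_hasDerivAt_zero (f := U 0) (fun τ => by simpa using hU 0 τ) t 0,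
        eq_of_hasDerivAt_zero (f := B 0) (fun τ => by simpa using hB 0 τ) t 0, hU0, hB0]
      simp
    · have hm := one_le_sum_sq_of_ne_zero hk
      have ha : (∑ i, bt i * (k i : ℝ)) ^ 2 ≤ T * ∑ i, (k i : ℝ) ^ 2 :=
        (Finset.sum_mul_sq_le_sq_mul_sq _ _ _).trans
          (mul_le_mul_of_nonneg_right (le_add_of_nonneg_left zero_le_one) (by positivity))
      exact mode_energy_le_of_diophantine hm hT ha hc.le (hD k hk) hs hC0.le (hC _ t hm ht)
        (hU k) (hB k) ht
  have hweight : √(3 * C * (1 + t) ^ (-(s / (1 + r)))) =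
      √(3 * C) * (1 + t) ^ (-(s / (2 * (1 + r)))) := by
    rw [sqrt_mul (by positivity), sqrt_eq_rpow ((1 + t) ^ _), ← rpow_mul (by linarith)]
    congr 2
    field_simp
  calc _ ≤ 2 * √(3 * C * (1 + t) ^ (-(s / (1 + r)))) * (_ + _) :=
        sqrt_tsum_add_sqrt_tsum_le (by positivity) (fun _ => by positivity) (fun _ => by positivity)
          hSU hSB (fun _ => by positivity) (fun _ => by positivity) hmode
    _ = _ := by rw [hweight]; ring
end

section
/- Let $u$ be a mean-zero function on $\mathbb{T}^n$, and let $A, M > 0$ with $A/M \le 1$, and exponents $s \ge 0$, $r > 0$, $m \ge s/2 + 1$. Then $\frac{A}{M}\|\Lambda^{s/2+1}u\|_{L^2}^2 - \|\Lambda^{s/2 - r}u\|_{L^2}^2 \le \Big(\frac{A}{M}\Big)^{1 + \frac{m - s/2 - 1}{1+r}} \|\Lambda^m u\|_{L^2}^2$. -/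
/-! Everything happens frequency by frequency. Put `t = |k|^(-2r-2)` and `θ = (m - s/2 - 1)/(1 + r)`,
so that `|k|^(s+2) = t^θ |k|^(2m)` and `|k|^(s-2r) = t |k|^(s+2)`. The contribution of the frequency `k`
to the left side is then `(A/M - t) t^θ |k|^(2m) |â k|²`, which is nonpositive when `t ≥ A/M` and at most
`(A/M)^(1+θ) |k|^(2m) |â k|²` otherwise. At `k = 0` these identities fail, but that frequency contributes
nothing since `â 0 = 0`. -/

open Real

lemma sub_mul_rpow_le_rpow_one_add {ε t θ : ℝ} (hε : 0 ≤ ε) (ht : 0 ≤ t) (hθ : 0 ≤ θ) :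
    (ε - t) * t ^ θ ≤ ε ^ (1 + θ) := by
  rw [rpow_add' hε (by linarith), rpow_one]
  rcases le_or_gt ε t with hεt | htε
  · exact (mul_nonpos_of_nonpos_of_nonneg (by linarith) (rpow_nonneg ht θ)).trans
      (mul_nonneg hε (rpow_nonneg hε θ))
  · exact mul_le_mul (by linarith) (rpow_le_rpow ht htε.le hθ) (rpow_nonneg ht θ) hε

lemma mul_rpow_sub_rpow_le {ε ρ s r m : ℝ} (hε : 0 ≤ ε) (hρ : 0 < ρ) (hr : 0 < 1 + r)
    (hm : s / 2 + 1 ≤ m) :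
    ε * ρ ^ (s + 2) - ρ ^ (s - 2 * r) ≤ ε ^ (1 + (m - s / 2 - 1) / (1 + r)) * ρ ^ (2 * m) := by
  set θ := (m - s / 2 - 1) / (1 + r) with hθ
  set t := ρ ^ (-(2 * r + 2))
  have high : ρ ^ (s + 2) = t ^ θ * ρ ^ (2 * m) := by
    rw [← rpow_mul hρ.le, ← rpow_add hρ, hθ]
    congr 1
    field_simp
    ring
  have low : ρ ^ (s - 2 * r) = t * ρ ^ (s + 2) := by
    rw [← rpow_add hρ]
    ring_nf
  calc ε * ρ ^ (s + 2) - ρ ^ (s - 2 * r) = (ε - t) * t ^ θ * ρ ^ (2 * m) := by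
        rw [low, high]; ring
    _ ≤ ε ^ (1 + θ) * ρ ^ (2 * m) :=
        mul_le_mul_of_nonneg_right
          (sub_mul_rpow_le_rpow_one_add hε (rpow_nonneg hρ.le _) (div_nonneg (by linarith) hr.le))
          (rpow_nonneg hρ.le _)

lemma sqrt_sum_intCast_sq_pos {ι : Type*} [Fintype ι] {k : ι → ℤ} (hk : k ≠ 0) :
    0 < √(∑ i, (k i : ℝ) ^ 2) := by
  obtain ⟨i, hi⟩ := Function.ne_iff.mp hk
  exact sqrt_pos.mpr <| Finset.sum_pos' (fun j _ => sq_nonneg _)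
    ⟨i, Finset.mem_univ i, sq_pos_of_ne_zero (Int.cast_ne_zero.mpr hi)⟩

lemma mul_tsum_sub_tsum_le_mul_tsum {α : Type*} {f g h : α → ℝ} {c d : ℝ}
    (hf : Summable f) (hg : Summable g) (hh : Summable h) (hle : ∀ k, c * f k - g k ≤ d * h k) :
    c * ∑' k, f k - ∑' k, g k ≤ d * ∑' k, h k := by
  rw [← tsum_mul_left, ← tsum_mul_left, ← (hf.mul_left c).tsum_sub hg]
  exact (hf.mul_left c |>.sub hg).tsum_le_tsum hle (hh.mul_left d)

theorem frequency_splitting_inequality_general (n : ℕ) (A M s r m : ℝ)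
    (hA : 0 < A) (hM : 0 < M)
    (hr : 0 < r) (hm : s / 2 + 1 ≤ m)
    (a : (Fin n → ℤ) → ℂ) (ha0 : a 0 = 0)
    (h1 : Summable (fun k : Fin n → ℤ =>
      (Real.sqrt (∑ i, ((k i : ℝ)) ^ 2)) ^ (s + 2) * ‖a k‖ ^ 2))
    (h2 : Summable (fun k : Fin n → ℤ =>
      (Real.sqrt (∑ i, ((k i : ℝ)) ^ 2)) ^ (s - 2 * r) * ‖a k‖ ^ 2))
    (h3 : Summable (fun k : Fin n → ℤ =>
      (Real.sqrt (∑ i, ((k i : ℝ)) ^ 2)) ^ (2 * m) * ‖a k‖ ^ 2)) :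
    A / M * (∑' k : Fin n → ℤ, (Real.sqrt (∑ i, ((k i : ℝ)) ^ 2)) ^ (s + 2) * ‖a k‖ ^ 2)
      - (∑' k : Fin n → ℤ, (Real.sqrt (∑ i, ((k i : ℝ)) ^ 2)) ^ (s - 2 * r) * ‖a k‖ ^ 2)
    ≤ (A / M) ^ (1 + (m - s / 2 - 1) / (1 + r)) *
        ∑' k : Fin n → ℤ, (Real.sqrt (∑ i, ((k i : ℝ)) ^ 2)) ^ (2 * m) * ‖a k‖ ^ 2 := by
  refine mul_tsum_sub_tsum_le_mul_tsum h1 h2 h3 fun k => ?_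
  rcases eq_or_ne k 0 with rfl | hk
  · simp [ha0]
  · have hweight := mul_rpow_sub_rpow_le (div_pos hA hM).le (sqrt_sum_intCast_sq_pos hk)
      (by linarith : 0 < 1 + r) hm
    linarith [mul_le_mul_of_nonneg_right hweight (sq_nonneg ‖a k‖)]

theorem frequency_splitting_inequality (n : ℕ) (A M s r m : ℝ)
    (hA : 0 < A) (hM : 0 < M) (hAM : A / M ≤ 1)
    (hs : 0 ≤ s) (hr : 0 < r) (hm : s / 2 + 1 ≤ m)
    (a : (Fin n → ℤ) → ℂ) (ha0 : a 0 = 0)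
    (h1 : Summable (fun k : Fin n → ℤ =>
      (Real.sqrt (∑ i, ((k i : ℝ)) ^ 2)) ^ (s + 2) * ‖a k‖ ^ 2))
    (h2 : Summable (fun k : Fin n → ℤ =>
      (Real.sqrt (∑ i, ((k i : ℝ)) ^ 2)) ^ (s - 2 * r) * ‖a k‖ ^ 2))
    (h3 : Summable (fun k : Fin n → ℤ =>
      (Real.sqrt (∑ i, ((k i : ℝ)) ^ 2)) ^ (2 * m) * ‖a k‖ ^ 2)) :
    A / M * (∑' k : Fin n → ℤ, (Real.sqrt (∑ i, ((k i : ℝ)) ^ 2)) ^ (s + 2) * ‖a k‖ ^ 2)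
      - (∑' k : Fin n → ℤ, (Real.sqrt (∑ i, ((k i : ℝ)) ^ 2)) ^ (s - 2 * r) * ‖a k‖ ^ 2)
    ≤ (A / M) ^ (1 + (m - s / 2 - 1) / (1 + r)) *
        ∑' k : Fin n → ℤ, (Real.sqrt (∑ i, ((k i : ℝ)) ^ 2)) ^ (2 * m) * ‖a k‖ ^ 2 :=
  frequency_splitting_inequality_general n A M s r m hA hM hr hm a ha0 h1 h2 h3
end
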